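/- Let Z₁, Z₂, Z₃ be {0,1}-valued random variables such that H(Z₁) ≥ H(Z₂) and Z₃ is independent of the pair (Z₁, Z₂). Then H(Z₁) − H(Z₂) ≥ |H(Z₁ ⊕ Z₃) − H(Z₂ ⊕ Z₃)|. Moreover, if H(Z₁) > H(Z₂) and H(Z₃) > 0, the inequality is strict. -/

import Mathlib

open MeasureTheory ProbabilityTheory

/-- Binary entropy (base 2). -/
noncomputable def hb (p : ℝ) : ℝ := -(p * Real.logb 2 p) - (1 - p) * Real.logb 2 (1 - p)

/-- Shannon entropy of a `{0,1}`-valued random variable. -/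
noncomputable def H2 {Ω : Type*} [MeasurableSpace Ω] (μ : Measure Ω) (Z : Ω → ZMod 2) : ℝ :=
  hb ((μ {ω | Z ω = 1}).toReal)

/-!
Write `p, q, r` for the probabilities that `Z₁, Z₂, Z₃` equal `1` and `h` for binary entropy.
Independence gives `P(Zᵢ ⊕ Z₃ = 1) = p ⋆ r := p (1 - r) + (1 - p) r` (`binConv p r`).
Since `x ↦ 1 - x` preserves both `h(x)` and `h(x ⋆ r)`, one may assume `q ≤ p ≤ 1/2` and
`r ≤ 1/2`. Then `h(q ⋆ r) ≤ h(p ⋆ r)`, because `· ⋆ r` is monotone with values in `[0, 1/2]`,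
while the gap `p ↦ h(p) - h(p ⋆ r)` is nondecreasing, and strictly increasing when `r > 0`;
these bound the difference `h(p ⋆ r) - h(q ⋆ r)` from both sides.
-/

open Real Set

noncomputable def binConv (p r : ℝ) : ℝ := p * (1 - r) + (1 - p) * r

section binConv

variable {p q r : ℝ}

lemma binConv_comm (p r : ℝ) : binConv p r = binConv r p := by unfold binConv; ring

lemma binConv_zero_right (p : ℝ) : binConv p 0 = p := by unfold binConv; ring

lemma binConv_one_sub_left (p r : ℝ) : binConv (1 - p) r = 1 - binConv p r := by
  unfold binConv; ring

lemma le_binConv (hp : p ≤ 2⁻¹) (hr : 0 ≤ r) : p ≤ binConv p r := by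
  unfold binConv; nlinarith

lemma lt_binConv (hp : p < 2⁻¹) (hr : 0 < r) : p < binConv p r := by
  unfold binConv; nlinarith

lemma binConv_le_half (hp : p ≤ 2⁻¹) (hr : r ≤ 2⁻¹) : binConv p r ≤ 2⁻¹ := by
  unfold binConv; nlinarith

lemma binConv_mono_left (hr : r ≤ 2⁻¹) (hqp : q ≤ p) : binConv q r ≤ binConv p r := by
  unfold binConv; nlinarith

end binConv

section binEntropy

variable {p q r : ℝ}

lemma hasDerivAt_binEntropy_sub_binEntropy_binConv (hp₀ : p ≠ 0) (hp₁ : p ≠ 1)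
    (hs₀ : binConv p r ≠ 0) (hs₁ : binConv p r ≠ 1) :
    HasDerivAt (fun x => binEntropy x - binEntropy (binConv x r))
      (log (1 - p) - log p - (1 - 2 * r) * (log (1 - binConv p r) - log (binConv p r))) p := by
  have hconv : HasDerivAt (fun x => binConv x r) (1 - 2 * r) p := by
    unfold binConv
    refine (((hasDerivAt_id p).mul_const (1 - r)).add
      (((hasDerivAt_id p).const_sub 1).mul_const r)).congr_deriv ?_
    ring
  refine ((hasDerivAt_binEntropy hp₀ hp₁).sub
    ((hasDerivAt_binEntropy hs₀ hs₁).comp p hconv)).congr_deriv ?_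
  ring

/-- The derivative of the gap is `L(p) - (1 - 2r) L(p ⋆ r)` with `L(x) = log((1 - x) / x)`;
since `p < p ⋆ r ≤ 1/2` and `L` is decreasing and nonnegative on `(0, 1/2]`, it is positive. -/
lemma strictMonoOn_binEntropy_sub_binEntropy_binConv (hr₀ : 0 < r) (hr : r ≤ 2⁻¹) :
    StrictMonoOn (fun p => binEntropy p - binEntropy (binConv p r)) (Icc 0 2⁻¹) := by
  refine strictMonoOn_of_deriv_pos (convex_Icc 0 2⁻¹) (by unfold binConv; fun_prop)
    fun x hx => ?_
  rw [interior_Icc] at hx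
  obtain ⟨hx₀, hx⟩ := hx
  have hxs : x < binConv x r := lt_binConv hx hr₀
  have hs : binConv x r ≤ 2⁻¹ := binConv_le_half hx.le hr
  rw [(hasDerivAt_binEntropy_sub_binEntropy_binConv hx₀.ne' (by linarith) (by linarith)
    (by linarith)).deriv]
  have hlog_lt : log (1 - binConv x r) - log (binConv x r) < log (1 - x) - log x := by
    have := log_lt_log hx₀ hxs
    have := log_le_log (by linarith) (by linarith : 1 - binConv x r ≤ 1 - x)
    linarith
  have hlog_nonneg : 0 ≤ log (1 - binConv x r) - log (binConv x r) :=
    sub_nonneg.2 (log_le_log (by linarith) (by linarith))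
  nlinarith

lemma monotoneOn_binEntropy_sub_binEntropy_binConv (hr₀ : 0 ≤ r) (hr : r ≤ 2⁻¹) :
    MonotoneOn (fun p => binEntropy p - binEntropy (binConv p r)) (Icc 0 2⁻¹) := by
  rcases hr₀.eq_or_lt with rfl | hr₀
  · simp only [binConv_zero_right, sub_self]
    exact monotoneOn_const
  · exact (strictMonoOn_binEntropy_sub_binEntropy_binConv hr₀ hr).monotoneOn

lemma binEntropy_binConv_le_of_le_half (hq₀ : 0 ≤ q) (hqp : q ≤ p) (hp : p ≤ 2⁻¹)
    (hr₀ : 0 ≤ r) (hr : r ≤ 2⁻¹) : binEntropy (binConv q r) ≤ binEntropy (binConv p r) :=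
  binEntropy_strictMonoOn.monotoneOn
    ⟨hq₀.trans (le_binConv (hqp.trans hp) hr₀), binConv_le_half (hqp.trans hp) hr⟩
    ⟨(hq₀.trans hqp).trans (le_binConv hp hr₀), binConv_le_half hp hr⟩
    (binConv_mono_left hr hqp)

lemma abs_binEntropy_binConv_sub_le_of_le_half (hq₀ : 0 ≤ q) (hqp : q ≤ p) (hp : p ≤ 2⁻¹)
    (hr₀ : 0 ≤ r) (hr : r ≤ 2⁻¹) :
    |binEntropy (binConv p r) - binEntropy (binConv q r)| ≤ binEntropy p - binEntropy q := by
  have hq : q ∈ Icc (0 : ℝ) 2⁻¹ := ⟨hq₀, hqp.trans hp⟩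
  have hp' : p ∈ Icc (0 : ℝ) 2⁻¹ := ⟨hq₀.trans hqp, hp⟩
  have hent := binEntropy_strictMonoOn.monotoneOn hq hp' hqp
  have hconv := binEntropy_binConv_le_of_le_half hq₀ hqp hp hr₀ hr
  have hgap := monotoneOn_binEntropy_sub_binEntropy_binConv hr₀ hr hq hp' hqp
  rw [abs_sub_le_iff]
  constructor <;> linarith

lemma abs_binEntropy_binConv_sub_lt_of_le_half (hq₀ : 0 ≤ q) (hqp : q < p) (hp : p ≤ 2⁻¹)
    (hr₀ : 0 < r) (hr : r ≤ 2⁻¹) :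
    |binEntropy (binConv p r) - binEntropy (binConv q r)| < binEntropy p - binEntropy q := by
  have hq : q ∈ Icc (0 : ℝ) 2⁻¹ := ⟨hq₀, hqp.le.trans hp⟩
  have hp' : p ∈ Icc (0 : ℝ) 2⁻¹ := ⟨hq₀.trans hqp.le, hp⟩
  have hent := binEntropy_strictMonoOn hq hp' hqp
  have hconv := binEntropy_binConv_le_of_le_half hq₀ hqp.le hp hr₀.le hr
  have hgap := strictMonoOn_binEntropy_sub_binEntropy_binConv hr₀ hr hq hp' hqp
  rw [abs_sub_lt_iff]
  constructor <;> linarith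

lemma exists_mem_Icc_half_binEntropy_binConv_eq (hp : p ∈ Icc (0 : ℝ) 1) :
    ∃ p' ∈ Icc (0 : ℝ) 2⁻¹, binEntropy p' = binEntropy p ∧
      ∀ r, binEntropy (binConv p' r) = binEntropy (binConv p r) := by
  rcases le_total p 2⁻¹ with h | h
  · exact ⟨p, ⟨hp.1, h⟩, rfl, fun _ => rfl⟩
  · refine ⟨1 - p, ⟨by linarith [hp.2], by linarith⟩, binEntropy_one_sub p, fun r => ?_⟩
    rw [binConv_one_sub_left, binEntropy_one_sub]

lemma abs_binEntropy_binConv_sub_le (hp : p ∈ Icc (0 : ℝ) 1) (hq : q ∈ Icc (0 : ℝ) 1)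
    (hr : r ∈ Icc (0 : ℝ) 1) (h : binEntropy q ≤ binEntropy p) :
    |binEntropy (binConv p r) - binEntropy (binConv q r)| ≤ binEntropy p - binEntropy q := by
  obtain ⟨p', hp', hpp', hconv_p⟩ := exists_mem_Icc_half_binEntropy_binConv_eq hp
  obtain ⟨q', hq', hqq', hconv_q⟩ := exists_mem_Icc_half_binEntropy_binConv_eq hq
  obtain ⟨r', hr', -, hconv_r⟩ := exists_mem_Icc_half_binEntropy_binConv_eq hr
  have hq'p' : q' ≤ p' := (binEntropy_strictMonoOn.le_iff_le hq' hp').1 (hqq' ▸ hpp' ▸ h)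
  have key := abs_binEntropy_binConv_sub_le_of_le_half hq'.1 hq'p' hp'.2 hr'.1 hr'.2
  rwa [binConv_comm p', binConv_comm q', hconv_r, hconv_r, binConv_comm r, binConv_comm r,
    hconv_p, hconv_q, hpp', hqq'] at key

lemma abs_binEntropy_binConv_sub_lt (hp : p ∈ Icc (0 : ℝ) 1) (hq : q ∈ Icc (0 : ℝ) 1)
    (hr : r ∈ Icc (0 : ℝ) 1) (h : binEntropy q < binEntropy p) (hr_pos : 0 < binEntropy r) :
    |binEntropy (binConv p r) - binEntropy (binConv q r)| < binEntropy p - binEntropy q := by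
  obtain ⟨p', hp', hpp', hconv_p⟩ := exists_mem_Icc_half_binEntropy_binConv_eq hp
  obtain ⟨q', hq', hqq', hconv_q⟩ := exists_mem_Icc_half_binEntropy_binConv_eq hq
  obtain ⟨r', hr', hrr', hconv_r⟩ := exists_mem_Icc_half_binEntropy_binConv_eq hr
  have hq'p' : q' < p' := (binEntropy_strictMonoOn.lt_iff_lt hq' hp').1 (hqq' ▸ hpp' ▸ h)
  have hr'_pos : 0 < r' := hr'.1.lt_of_ne (by rintro rfl; simp [← hrr'] at hr_pos)
  have key := abs_binEntropy_binConv_sub_lt_of_le_half hq'.1 hq'p' hp'.2 hr'_pos hr'.2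
  rwa [binConv_comm p', binConv_comm q', hconv_r, hconv_r, binConv_comm r, binConv_comm r,
    hconv_p, hconv_q, hpp', hqq'] at key

end binEntropy

lemma hb_eq_binEntropy_div_log_two (p : ℝ) : hb p = binEntropy p / log 2 := by
  unfold hb binEntropy logb
  rw [log_inv, log_inv]
  ring

section Probability

variable {Ω : Type*} [MeasurableSpace Ω] {μ : Measure Ω} [IsProbabilityMeasure μ]

lemma measureReal_add_eq_one_eq_binConv {X Y : Ω → ZMod 2} (hX : Measurable X)
    (hY : Measurable Y) (hXY : IndepFun X Y μ) :
    μ.real {ω | X ω + Y ω = 1} = binConv (μ.real {ω | X ω = 1}) (μ.real {ω | Y ω = 1}) := by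
  set A := {ω | X ω = 1}
  set B := {ω | Y ω = 1}
  have hA : MeasurableSet A := hX (measurableSet_singleton 1)
  have hB : MeasurableSet B := hY (measurableSet_singleton 1)
  have hAB : μ.real (A ∩ B) = μ.real A * μ.real B := by
    simp only [measureReal_def, ← ENNReal.toReal_mul]
    exact congrArg ENNReal.toReal (hXY.measure_inter_preimage_eq_mul {1} {1}
      (measurableSet_singleton 1) (measurableSet_singleton 1))
  have hsymm : {ω | X ω + Y ω = 1} = symmDiff A B := by
    ext ω
    simp only [Set.mem_ofPred_eq, Set.mem_symmDiff, A, B]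
    generalize X ω = a
    generalize Y ω = b
    revert a b
    decide
  have hA_sdiff := measureReal_inter_add_sdiff (μ := μ) (s := A) hB
  have hB_sdiff := measureReal_inter_add_sdiff (μ := μ) (s := B) hA
  rw [Set.inter_comm] at hB_sdiff
  rw [hsymm, measureReal_symmDiff_eq hA hB]
  unfold binConv
  linarith

lemma H2_add_of_indepFun {X Y : Ω → ZMod 2} (hX : Measurable X) (hY : Measurable Y)
    (hXY : IndepFun X Y μ) :
    H2 μ (fun ω => X ω + Y ω) = hb (binConv (μ.real {ω | X ω = 1}) (μ.real {ω | Y ω = 1})) :=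
  congrArg hb (measureReal_add_eq_one_eq_binConv hX hY hXY)

end Probability

/-- If `Z₃` is independent of the pair `(Z₁, Z₂)` and `H(Z₁) ≥ H(Z₂)`, then
`H(Z₁) − H(Z₂) ≥ |H(Z₁⊕Z₃) − H(Z₂⊕Z₃)|`; strict if `H(Z₁) > H(Z₂)` and `H(Z₃) > 0`. -/
theorem entropy_gap_of_indep_xor {Ω : Type*} [MeasurableSpace Ω] (μ : Measure Ω)
    [IsProbabilityMeasure μ] (Z₁ Z₂ Z₃ : Ω → ZMod 2)
    (hm₁ : Measurable Z₁) (hm₂ : Measurable Z₂) (hm₃ : Measurable Z₃)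
    (hInd : IndepFun (fun ω => (Z₁ ω, Z₂ ω)) Z₃ μ)
    (hH : H2 μ Z₂ ≤ H2 μ Z₁) :
    (|H2 μ (fun ω => Z₁ ω + Z₃ ω) - H2 μ (fun ω => Z₂ ω + Z₃ ω)| ≤ H2 μ Z₁ - H2 μ Z₂) ∧
    (H2 μ Z₂ < H2 μ Z₁ → 0 < H2 μ Z₃ →
      |H2 μ (fun ω => Z₁ ω + Z₃ ω) - H2 μ (fun ω => Z₂ ω + Z₃ ω)| < H2 μ Z₁ - H2 μ Z₂) := by
  have hprob (s : Set Ω) : μ.real s ∈ Icc (0 : ℝ) 1 := ⟨measureReal_nonneg, measureReal_le_one⟩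
  have hlog : 0 < log 2 := log_pos one_lt_two
  rw [H2_add_of_indepFun hm₁ hm₃ (hInd.comp measurable_fst measurable_id),
    H2_add_of_indepFun hm₂ hm₃ (hInd.comp measurable_snd measurable_id)]
  simp only [H2, hb_eq_binEntropy_div_log_two, ← sub_div, abs_div, abs_of_pos hlog,
    div_le_div_iff_of_pos_right hlog, div_lt_div_iff_of_pos_right hlog,
    div_pos_iff_of_pos_right hlog] at hH ⊢
  exact ⟨abs_binEntropy_binConv_sub_le (hprob _) (hprob _) (hprob _) hH,
    abs_binEntropy_binConv_sub_lt (hprob _) (hprob _) (hprob _)⟩
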